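/- arXiv:2305.17692 — 4 statements merged into one kernel-verified Lean document; each statement's English description precedes it below -/
import Mathlib

section
/- Let S be a convex subset of ℝ × ℝ that is downward closed on the nonnegative quadrant, i.e., whenever (x, y) ∈ S and 0 ≤ x' ≤ x and 0 ≤ y' ≤ y, also (x', y') ∈ S. Let a, b ≥ 0 and suppose (a, b) ∈ S and (0, a + b) ∈ S. Then S contains the entire trapezoid {(x, y) : 0 ≤ x ≤ a, 0 ≤ y, x + y ≤ a + b}. -/
/-- Geometric content of Lemma 3 (Equivalence): a convex set that is downward
closed on the nonnegative quadrant and contains `(a, b)` and `(0, a + b)`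
contains the whole trapezoid `{0 ≤ x ≤ a, 0 ≤ y, x + y ≤ a + b}`. -/
theorem convex_downward_closed_trapezoid (S : Set (ℝ × ℝ)) (hS : Convex ℝ S)
    (hdc : ∀ x y x' y' : ℝ, (x, y) ∈ S → 0 ≤ x' → x' ≤ x → 0 ≤ y' → y' ≤ y → (x', y') ∈ S)
    (a b : ℝ) (ha : 0 ≤ a) (hb : 0 ≤ b)
    (hP0 : (a, b) ∈ S) (hP1 : ((0 : ℝ), a + b) ∈ S) :
    {p : ℝ × ℝ | 0 ≤ p.1 ∧ p.1 ≤ a ∧ 0 ≤ p.2 ∧ p.1 + p.2 ≤ a + b} ⊆ S := by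
  rintro ⟨x, y⟩ ⟨hx0, hxa, hy0, hxy⟩
  rcases eq_or_lt_of_le ha with h | hapos
  · have hx : x = 0 := le_antisymm (hxa.trans h.symm.le) hx0
    exact hdc 0 (a + b) x y hP1 hx0 (le_of_eq hx) hy0 (by linarith)
  · set t := x / a with ht
    have ht0 : 0 ≤ t := div_nonneg hx0 ha
    have ht1 : t ≤ 1 := (div_le_one hapos).2 hxa
    have hmem : t • ((a : ℝ), b) + (1 - t) • ((0 : ℝ), a + b) ∈ S :=
      hS hP0 hP1 ht0 (by linarith) (by ring)
    have heq : t • ((a : ℝ), b) + (1 - t) • ((0 : ℝ), a + b)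
        = (x, a + b - x) := by
      have hta : t * a = x := div_mul_cancel₀ x (ne_of_gt hapos)
      simp [Prod.ext_iff, Prod.smul_mk, smul_eq_mul]
      constructor
      · linarith
      · nlinarith
    rw [heq] at hmem
    exact hdc x (a + b - x) x y hmem hx0 le_rfl hy0 (by linarith)
end

section
/- Let I be a nonempty index type and let a, b : I → ℝ with aᵢ ≥ 0 and bᵢ ≥ 0 for all i. Define S = ⋃ᵢ ([0, aᵢ] × [0, bᵢ]) and T = ⋃ᵢ {(x, y) : 0 ≤ x ≤ aᵢ, 0 ≤ y, x + y ≤ aᵢ + bᵢ}. If S is convex and for every i the point (0, aᵢ + bᵢ) belongs to S, then S = T. -/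
/-- Abstract form of Lemma 3 (Equivalence): the union of rectangles
`[0, aᵢ] × [0, bᵢ]`, if convex and containing each point `(0, aᵢ + bᵢ)`,
equals the union of the corresponding trapezoids. -/
theorem union_rect_eq_union_trapezoid {I : Type*} [Nonempty I]
    (a b : I → ℝ) (ha : ∀ i, 0 ≤ a i) (hb : ∀ i, 0 ≤ b i)
    (S T : Set (ℝ × ℝ))
    (hSdef : S = ⋃ i, Set.Icc (0 : ℝ) (a i) ×ˢ Set.Icc (0 : ℝ) (b i))
    (hTdef : T = ⋃ i, {p : ℝ × ℝ | 0 ≤ p.1 ∧ p.1 ≤ a i ∧ 0 ≤ p.2 ∧ p.1 + p.2 ≤ a i + b i})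
    (hconv : Convex ℝ S) (hpt : ∀ i, ((0 : ℝ), a i + b i) ∈ S) :
    S = T := by
  apply Set.Subset.antisymm
  · -- S ⊆ T : each rectangle is inside the corresponding trapezoid
    rw [hSdef, hTdef]
    refine Set.iUnion_mono fun i => ?_
    rintro ⟨x, y⟩ ⟨⟨hx0, hx1⟩, hy0, hy1⟩
    exact ⟨hx0, hx1, hy0, add_le_add hx1 hy1⟩
  · -- T ⊆ S
    rw [hTdef]
    refine Set.iUnion_subset fun i => ?_
    rintro ⟨x, y⟩ ⟨hx0, hx1, hy0, hsum⟩
    by_cases hyb : y ≤ b i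
    · rw [hSdef]
      exact Set.mem_iUnion.2 ⟨i, ⟨⟨hx0, hx1⟩, hy0, hyb⟩⟩
    · push_neg at hyb
      have hxa : x < a i := by linarith
      have hai : 0 < a i := lt_of_le_of_lt hx0 hxa
      -- q = (x, a i + b i - x) ∈ S by convexity
      have hrect : ((a i, b i) : ℝ × ℝ) ∈ S := by
        rw [hSdef]
        exact Set.mem_iUnion.2 ⟨i, ⟨⟨ha i, le_refl _⟩, hb i, le_refl _⟩⟩
      have hq : ((x, a i + b i - x) : ℝ × ℝ) ∈ S := by
        have hmem := hconv (hpt i) hrect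
          (a := 1 - x / a i) (b := x / a i)
          (by have : x / a i ≤ 1 := by rw [div_le_one hai]; linarith
              linarith)
          (div_nonneg hx0 hai.le) (by ring)
        have hc : x / a i * a i = x := div_mul_cancel₀ _ hai.ne'
        have heq : ((1 - x / a i) • ((0 : ℝ), a i + b i) + (x / a i) • (a i, b i) : ℝ × ℝ)
            = (x, a i + b i - x) := by
          simp [Prod.ext_iff, Prod.smul_def, smul_eq_mul]
          constructor <;> nlinarith [hc]
        rwa [heq] at hmem
      have hbase : ((x, b i) : ℝ × ℝ) ∈ S := by
        rw [hSdef]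
        exact Set.mem_iUnion.2 ⟨i, ⟨⟨hx0, hx1⟩, hb i, le_refl _⟩⟩
      -- p = (x, y) is a convex combination of (x, b i) and q
      set s : ℝ := (y - b i) / (a i - x) with hs
      have hax : 0 < a i - x := by linarith
      have hs0 : 0 ≤ s := div_nonneg (by linarith) hax.le
      have hs1 : s ≤ 1 := by rw [hs, div_le_one hax]; linarith
      have hmem := hconv hbase hq (a := 1 - s) (b := s) (by linarith) hs0 (by ring)
      have hc : s * (a i - x) = y - b i := div_mul_cancel₀ _ hax.ne'
      have heq : ((1 - s) • ((x, b i) : ℝ × ℝ) + s • (x, a i + b i - x)) = (x, y) := by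
        simp [Prod.ext_iff, Prod.smul_def, smul_eq_mul]
        constructor <;> nlinarith [hc]
      rwa [heq] at hmem
end

section
/- Let α ∈ [0, 1] and ε ∈ [0, 1], and set Δ = ε²/16 − α(1 − α)·ε·(1 − 3ε/4) + (1 − ε)/4. Let v ∈ ℂ⁴ be the unit vector v = (√(1 − α), 0, 0, √α), and let M be the 4×4 complex matrix M = (1 − ε)·v v† + (ε/2)·diag(1 − α, 1 − α, α, α). Then M is Hermitian and its characteristic polynomial equals (X − α·ε/2)·(X − (1 − α)·ε/2)·(X − (1/2 − ε/4 − √Δ))·(X − (1/2 − ε/4 + √Δ)). -/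
/-!
After substituting `v`, the matrix `M` only couples `|00⟩` with `|11⟩`: it is the direct sum of
the diagonal entries `(1 - α)ε/2`, `αε/2` on `|01⟩`, `|10⟩` and a real symmetric `2 × 2` block on
`|00⟩`, `|11⟩` with trace `1 - ε/2` and determinant `(1/2 - ε/4)² - Δ`, whose eigenvalues are
therefore `1/2 - ε/4 ∓ √Δ`.
-/

open Polynomial

namespace Matrix

variable {n R : Type*} [CommRing R]

theorem charpoly_fin_four_of_corner_block (p q q' r s t : R) :
    (!![p, 0, 0, q; 0, r, 0, 0; 0, 0, s, 0; q', 0, 0, t]).charpoly =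
      (X - C r) * (X - C s) * ((X - C p) * (X - C t) - C (q * q')) := by
  simp [charpoly, det_succ_row_zero, Fin.sum_univ_succ, charmatrix_apply, Fin.succAbove]
  ring

variable [StarRing R]

theorem smul_vecMulVec_add_smul_diagonal_fin_four (c d x y e f : R) :
    c • vecMulVec ![x, 0, 0, y] (star ![x, 0, 0, y]) + d • diagonal ![e, e, f, f] =
      !![c * (x * star x) + d * e, 0, 0, c * (x * star y);
        0, d * e, 0, 0;
        0, 0, d * f, 0;
        c * (y * star x), 0, 0, c * (y * star y) + d * f] := by
  ext i j
  rw [add_apply, smul_apply, smul_apply, vecMulVec_apply]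
  fin_cases i <;> fin_cases j <;> simp

theorem isHermitian_smul_vecMulVec_star_add_smul_diagonal [DecidableEq n] {c d : R}
    (hc : IsSelfAdjoint c) (hd : IsSelfAdjoint d) (v : n → R) {w : n → R}
    (hw : IsSelfAdjoint w) :
    (c • vecMulVec v (star v) + d • diagonal w).IsHermitian := by
  have hvv : (vecMulVec v (star v)).IsHermitian := by
    rw [IsHermitian, conjTranspose_vecMulVec, star_star]
  exact (hvv.smul hc).add ((isHermitian_diagonal_of_self_adjoint w hw).smul hd)

end Matrix

theorem Polynomial.X_sub_C_mul_X_sub_C_sub_C {R : Type*} [CommRing R] {p t k a b : R}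
    (hsum : a + b = p + t) (hprod : a * b = p * t - k) :
    (X - C p) * (X - C t) - C k = (X - C a) * (X - C b) := by
  have hsum' := congrArg C hsum
  have hprod' := congrArg C hprod
  simp only [map_add, map_mul, map_sub] at hsum' hprod'
  linear_combination X * hsum' - hprod'

-- `Δ` is the squared half-gap of the `2 × 2` block: `((p - t)/2)² + q²`.
theorem depolarizing_discriminant_nonneg {α : ℝ} (hα0 : 0 ≤ α) (hα1 : α ≤ 1) (ε : ℝ) :
    0 ≤ ε ^ 2 / 16 - α * (1 - α) * ε * (1 - 3 * ε / 4) + (1 - ε) / 4 := by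
  have hsq : ε ^ 2 / 16 - α * (1 - α) * ε * (1 - 3 * ε / 4) + (1 - ε) / 4 =
      ((1 - 2 * α) * (2 - ε) / 4) ^ 2 + (1 - ε) ^ 2 * (α * (1 - α)) := by
    ring
  rw [hsq]
  exact add_nonneg (sq_nonneg _) (mul_nonneg (sq_nonneg _) (mul_nonneg hα0 (sub_nonneg.2 hα1)))

theorem depolarizing_output_charpoly_general (α ε : ℝ)
    (hα : α ∈ Set.Icc (0 : ℝ) 1)
    (Δ : ℝ) (hΔ : Δ = ε ^ 2 / 16 - α * (1 - α) * ε * (1 - 3 * ε / 4) + (1 - ε) / 4)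
    (v : Fin 4 → ℂ)
    (hv : v = ![(Real.sqrt (1 - α) : ℂ), 0, 0, (Real.sqrt α : ℂ)])
    (M : Matrix (Fin 4) (Fin 4) ℂ)
    (hM : M = ((1 - ε : ℝ) : ℂ) • Matrix.vecMulVec v (star v)
        + ((ε / 2 : ℝ) : ℂ) • Matrix.diagonal ![((1 - α : ℝ) : ℂ), ((1 - α : ℝ) : ℂ),
            ((α : ℝ) : ℂ), ((α : ℝ) : ℂ)]) :
    M.IsHermitian ∧
    M.charpoly = (X - C ((α * ε / 2 : ℝ) : ℂ)) *
                 (X - C (((1 - α) * ε / 2 : ℝ) : ℂ)) *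
                 (X - C ((1 / 2 - ε / 4 - Real.sqrt Δ : ℝ) : ℂ)) *
                 (X - C ((1 / 2 - ε / 4 + Real.sqrt Δ : ℝ) : ℂ)) := by
  obtain ⟨hα0, hα1⟩ := hα
  refine ⟨?_, ?_⟩
  · rw [hM]
    exact Matrix.isHermitian_smul_vecMulVec_star_add_smul_diagonal (Complex.conj_ofReal _)
      (Complex.conj_ofReal _) v (Pi.isSelfAdjoint.2 fun i => by
        fin_cases i <;> exact Complex.conj_ofReal _)
  have sqrt_mul_self {x : ℝ} (hx : 0 ≤ x) : (√x : ℂ) * √x = x := by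
    rw [← Complex.ofReal_mul, Real.mul_self_sqrt hx]
  have hΔC : (Δ : ℂ) = ε ^ 2 / 16 - α * (1 - α) * ε * (1 - 3 * ε / 4) + (1 - ε) / 4 := by
    exact_mod_cast hΔ
  rw [hM, hv, Matrix.smul_vecMulVec_add_smul_diagonal_fin_four,
    Matrix.charpoly_fin_four_of_corner_block]
  simp only [Complex.star_def, Complex.conj_ofReal]
  rw [sqrt_mul_self hα0, sqrt_mul_self (sub_nonneg.2 hα1),
    Polynomial.X_sub_C_mul_X_sub_C_sub_C (a := ((1 / 2 - ε / 4 - √Δ : ℝ) : ℂ))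
      (b := ((1 / 2 - ε / 4 + √Δ : ℝ) : ℂ))]
  · push_cast
    ring_nf
  · push_cast
    ring
  · linear_combination (norm := skip) (1 - (ε : ℂ)) ^ 2 *
        ((√α : ℂ) * √α * sqrt_mul_self (sub_nonneg.2 hα1) + (1 - (α : ℂ)) * sqrt_mul_self hα0) -
      sqrt_mul_self (hΔ ▸ depolarizing_discriminant_nonneg hα0 hα1 ε) - hΔC
    push_cast
    ring

/-- The depolarizing-channel output state on `ℂ⁴` is Hermitian with
characteristic polynomial having roots `αε/2`, `(1−α)ε/2`, `1/2 − ε/4 ∓ √Δ`. -/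
theorem depolarizing_output_charpoly (α ε : ℝ)
    (hα : α ∈ Set.Icc (0 : ℝ) 1) (hε : ε ∈ Set.Icc (0 : ℝ) 1)
    (Δ : ℝ) (hΔ : Δ = ε ^ 2 / 16 - α * (1 - α) * ε * (1 - 3 * ε / 4) + (1 - ε) / 4)
    (v : Fin 4 → ℂ)
    (hv : v = ![(Real.sqrt (1 - α) : ℂ), 0, 0, (Real.sqrt α : ℂ)])
    (M : Matrix (Fin 4) (Fin 4) ℂ)
    (hM : M = ((1 - ε : ℝ) : ℂ) • Matrix.vecMulVec v (star v)
        + ((ε / 2 : ℝ) : ℂ) • Matrix.diagonal ![((1 - α : ℝ) : ℂ), ((1 - α : ℝ) : ℂ),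
            ((α : ℝ) : ℂ), ((α : ℝ) : ℂ)]) :
    M.IsHermitian ∧
    M.charpoly = (X - C ((α * ε / 2 : ℝ) : ℂ)) *
                 (X - C (((1 - α) * ε / 2 : ℝ) : ℂ)) *
                 (X - C ((1 / 2 - ε / 4 - Real.sqrt Δ : ℝ) : ℂ)) *
                 (X - C ((1 / 2 - ε / 4 + Real.sqrt Δ : ℝ) : ℂ)) :=
  depolarizing_output_charpoly_general α ε hα Δ hΔ v hv M hM
end

section
/- Let ε = 7/10. Define, for α ∈ [0, 1/2], with a ∗ b = (1 − a)b + a(1 − b), h₂(x) = −x·log₂ x − (1 − x)·log₂(1 − x) (where 0·log₂ 0 = 0), H(p₁,…,p₄) = −Σᵢ pᵢ·log₂ pᵢ, and Δ(α) = ε²/16 − α(1 − α)·ε·(1 − 3ε/4) + (1 − ε)/4: R(α) = 1 − h₂(α ∗ ε/2) and R'(α) = h₂(α) + h₂(α ∗ ε/2) − H(α·ε/2, (1 − α)·ε/2, 1/2 − ε/4 − √Δ(α), 1/2 − ε/4 + √Δ(α)). Let C = 1 − h₂(ε/2) and C_E = 2 − H(ε/4, ε/4, ε/4, 1 − 3ε/4).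 Then there exists α ∈ (0, 1/2) such that 0 < R(α) < C and R'(α) > (1 − R(α)/C)·C_E. -/
/-!
At `α = 1/11` one has `α ∗ ε/2 = 83/220` and `Δ(α) = (123/440)²`, so every entropy in the
claim is the entropy of a rational distribution. For rational `x`, `log₂ x` is squeezed between
rationals `p/q` by the exact comparisons `2^p ≤ x^q` resp. `x^q ≤ 2^p` (the exponents come from
continued-fraction approximations of `log₂ x`). Three decimals of each entropy then suffice:
`R(1/11) ≈ 0.044 < C ≈ 0.066`, and `R'(1/11) ≈ 0.070` beats the time-division rate `≈ 0.057`.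
-/

/-- Binary convolution `a ∗ b = (1 − a)b + a(1 − b)`. -/
noncomputable def binConv (a b : ℝ) : ℝ := (1 - a) * b + a * (1 - b)

/-- Binary entropy (base 2); `Real.logb 2 0 = 0`, so `0 · log₂ 0 = 0`. -/
noncomputable def binEnt (x : ℝ) : ℝ :=
  -(x * Real.logb 2 x) - (1 - x) * Real.logb 2 (1 - x)

/-- Shannon entropy (base 2) of a probability four-vector. -/
noncomputable def shannonEnt4 (p₁ p₂ p₃ p₄ : ℝ) : ℝ :=
  -(p₁ * Real.logb 2 p₁) - p₂ * Real.logb 2 p₂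
    - p₃ * Real.logb 2 p₃ - p₄ * Real.logb 2 p₄

open Real

section LogBounds

lemma logb_zpow_self {b : ℝ} (hb : 1 < b) (p : ℤ) : logb b (b ^ p) = p := by
  rw [← rpow_intCast, logb_rpow (by positivity) hb.ne']

variable {b x : ℝ} {p : ℤ} {q : ℕ}

lemma div_le_logb_of_zpow_le_pow (hb : 1 < b) (hq : 0 < q) (h : b ^ p ≤ x ^ q) :
    (p / q : ℝ) ≤ logb b x := by
  rw [div_le_iff₀ (by positivity), mul_comm, ← logb_pow, ← logb_zpow_self hb p]
  exact logb_le_logb_of_le hb (zpow_pos (by positivity) p) h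

lemma logb_le_div_of_pow_le_zpow (hb : 1 < b) (hx : 0 < x) (hq : 0 < q)
    (h : x ^ q ≤ b ^ p) : logb b x ≤ p / q := by
  rw [le_div_iff₀ (by positivity), mul_comm, ← logb_pow, ← logb_zpow_self hb p]
  exact logb_le_logb_of_le hb (pow_pos hx q) h

end LogBounds

section EntropyBounds

variable {x l₁ l₂ : ℝ}

lemma binEnt_le (hx₀ : 0 ≤ x) (hx₁ : x ≤ 1) (h₁ : l₁ ≤ logb 2 x)
    (h₂ : l₂ ≤ logb 2 (1 - x)) :
    binEnt x ≤ -(x * l₁) - (1 - x) * l₂ := by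
  have := mul_le_mul_of_nonneg_left h₁ hx₀
  have := mul_le_mul_of_nonneg_left h₂ (sub_nonneg.2 hx₁)
  unfold binEnt; linarith

lemma le_binEnt (hx₀ : 0 ≤ x) (hx₁ : x ≤ 1) (h₁ : logb 2 x ≤ l₁)
    (h₂ : logb 2 (1 - x) ≤ l₂) :
    -(x * l₁) - (1 - x) * l₂ ≤ binEnt x := by
  have := mul_le_mul_of_nonneg_left h₁ hx₀
  have := mul_le_mul_of_nonneg_left h₂ (sub_nonneg.2 hx₁)
  unfold binEnt; linarith

variable {p₁ p₂ p₃ p₄ l₃ l₄ : ℝ}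

lemma shannonEnt4_le (hp₁ : 0 ≤ p₁) (hp₂ : 0 ≤ p₂) (hp₃ : 0 ≤ p₃) (hp₄ : 0 ≤ p₄)
    (h₁ : l₁ ≤ logb 2 p₁) (h₂ : l₂ ≤ logb 2 p₂) (h₃ : l₃ ≤ logb 2 p₃) (h₄ : l₄ ≤ logb 2 p₄) :
    shannonEnt4 p₁ p₂ p₃ p₄ ≤ -(p₁ * l₁) - p₂ * l₂ - p₃ * l₃ - p₄ * l₄ := by
  have := mul_le_mul_of_nonneg_left h₁ hp₁
  have := mul_le_mul_of_nonneg_left h₂ hp₂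
  have := mul_le_mul_of_nonneg_left h₃ hp₃
  have := mul_le_mul_of_nonneg_left h₄ hp₄
  unfold shannonEnt4; linarith

lemma le_shannonEnt4 (hp₁ : 0 ≤ p₁) (hp₂ : 0 ≤ p₂) (hp₃ : 0 ≤ p₃) (hp₄ : 0 ≤ p₄)
    (h₁ : logb 2 p₁ ≤ l₁) (h₂ : logb 2 p₂ ≤ l₂) (h₃ : logb 2 p₃ ≤ l₃) (h₄ : logb 2 p₄ ≤ l₄) :
    -(p₁ * l₁) - p₂ * l₂ - p₃ * l₃ - p₄ * l₄ ≤ shannonEnt4 p₁ p₂ p₃ p₄ := by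
  have := mul_le_mul_of_nonneg_left h₁ hp₁
  have := mul_le_mul_of_nonneg_left h₂ hp₂
  have := mul_le_mul_of_nonneg_left h₃ hp₃
  have := mul_le_mul_of_nonneg_left h₄ hp₄
  unfold shannonEnt4; linarith

end EntropyBounds

lemma binEnt_one_div_eleven_ge : 0.438 ≤ binEnt (1 / 11) := by
  have := le_binEnt (x := 1 / 11) (by norm_num) (by norm_num)
    (logb_le_div_of_pow_le_zpow (p := -83) (q := 24)
      one_lt_two (by norm_num) (by norm_num) (by norm_num))
    (logb_le_div_of_pow_le_zpow (p := -3) (q := 22)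
      one_lt_two (by norm_num) (by norm_num) (by norm_num))
  norm_num at this ⊢
  linarith

lemma binEnt_83_div_220_mem : binEnt (83 / 220) ∈ Set.Icc 0.955 0.958 := by
  have lower := le_binEnt (x := 83 / 220) (by norm_num) (by norm_num)
    (logb_le_div_of_pow_le_zpow (p := -45) (q := 32)
      one_lt_two (by norm_num) (by norm_num) (by norm_num))
    (logb_le_div_of_pow_le_zpow (p := -15) (q := 22)
      one_lt_two (by norm_num) (by norm_num) (by norm_num))
  have upper := binEnt_le (x := 83 / 220) (by norm_num) (by norm_num)
    (div_le_logb_of_zpow_le_pow (p := -38) (q := 27)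
      one_lt_two (by norm_num) (by norm_num))
    (div_le_logb_of_zpow_le_pow (p := -13) (q := 19)
      one_lt_two (by norm_num) (by norm_num))
  norm_num at lower upper ⊢
  constructor <;> linarith

lemma binEnt_7_div_20_mem : binEnt (7 / 20) ∈ Set.Icc 0.933 0.935 := by
  have lower := le_binEnt (x := 7 / 20) (by norm_num) (by norm_num)
    (logb_le_div_of_pow_le_zpow (p := -53) (q := 35)
      one_lt_two (by norm_num) (by norm_num) (by norm_num))
    (logb_le_div_of_pow_le_zpow (p := -18) (q := 29)
      one_lt_two (by norm_num) (by norm_num) (by norm_num))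
  have upper := binEnt_le (x := 7 / 20) (by norm_num) (by norm_num)
    (div_le_logb_of_zpow_le_pow (p := -47) (q := 31)
      one_lt_two (by norm_num) (by norm_num))
    (div_le_logb_of_zpow_le_pow (p := -23) (q := 37)
      one_lt_two (by norm_num) (by norm_num))
  norm_num at lower upper ⊢
  constructor <;> linarith

lemma shannonEnt4_7_div_220_le :
    shannonEnt4 (7 / 220) (7 / 22) (1 / 22) (133 / 220) ≤ 1.327 := by
  have := shannonEnt4_le (by norm_num) (by norm_num) (by norm_num) (by norm_num)
    (div_le_logb_of_zpow_le_pow (x := 7 / 220) (p := -194) (q := 39)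
      one_lt_two (by norm_num) (by norm_num))
    (div_le_logb_of_zpow_le_pow (x := 7 / 22) (p := -38) (q := 23)
      one_lt_two (by norm_num) (by norm_num))
    (div_le_logb_of_zpow_le_pow (x := 1 / 22) (p := -165) (q := 37)
      one_lt_two (by norm_num) (by norm_num))
    (div_le_logb_of_zpow_le_pow (x := 133 / 220) (p := -8) (q := 11)
      one_lt_two (by norm_num) (by norm_num))
  norm_num at this ⊢
  linarith

lemma shannonEnt4_7_div_40_ge :
    1.829 ≤ shannonEnt4 (7 / 40) (7 / 40) (7 / 40) (19 / 40) := by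
  have h₁ := logb_le_div_of_pow_le_zpow (x := 7 / 40) (p := -88) (q := 35)
    one_lt_two (by norm_num) (by norm_num) (by norm_num)
  have := le_shannonEnt4 (by norm_num) (by norm_num) (by norm_num) (by norm_num) h₁ h₁ h₁
    (logb_le_div_of_pow_le_zpow (x := 19 / 40) (p := -44) (q := 41)
      one_lt_two (by norm_num) (by norm_num) (by norm_num))
  norm_num at this ⊢
  linarith

/-- For the entanglement-breaking depolarizing channel with `ε = 0.7`, quantum
superposition coding strictly outperforms time division: some `α ∈ (0, 1/2)`
gives a rate pair above the time-division line. -/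
theorem depolarizing_beats_time_division :
    let ε : ℝ := 7 / 10
    let Δ : ℝ → ℝ := fun α =>
      ε ^ 2 / 16 - α * (1 - α) * ε * (1 - 3 * ε / 4) + (1 - ε) / 4
    let R : ℝ → ℝ := fun α => 1 - binEnt (binConv α (ε / 2))
    let R' : ℝ → ℝ := fun α =>
      binEnt α + binEnt (binConv α (ε / 2))
        - shannonEnt4 (α * ε / 2) ((1 - α) * ε / 2)
            (1 / 2 - ε / 4 - Real.sqrt (Δ α)) (1 / 2 - ε / 4 + Real.sqrt (Δ α))
    let C : ℝ := 1 - binEnt (ε / 2)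
    let CE : ℝ := 2 - shannonEnt4 (ε / 4) (ε / 4) (ε / 4) (1 - 3 * ε / 4)
    ∃ α : ℝ, α ∈ Set.Ioo (0 : ℝ) (1 / 2) ∧
      0 < R α ∧ R α < C ∧ R' α > (1 - R α / C) * CE := by
  intro ε Δ R R' C CE
  have hΔ : √(Δ (1 / 11)) = 123 / 440 := by
    rw [show Δ (1 / 11) = (123 / 440) ^ 2 by norm_num [Δ, ε]]
    exact sqrt_sq (by norm_num)
  have hR : R (1 / 11) = 1 - binEnt (83 / 220) := by norm_num [R, ε, binConv]
  have hR' : R' (1 / 11) = binEnt (1 / 11) + binEnt (83 / 220)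
      - shannonEnt4 (7 / 220) (7 / 22) (1 / 22) (133 / 220) := by
    simp only [R', hΔ]
    norm_num [ε, binConv]
  have hC : C = 1 - binEnt (7 / 20) := by norm_num [C, ε]
  have hCE : CE = 2 - shannonEnt4 (7 / 40) (7 / 40) (7 / 40) (19 / 40) := by norm_num [CE, ε]
  obtain ⟨hc₁, hc₂⟩ := binEnt_83_div_220_mem
  obtain ⟨he₁, he₂⟩ := binEnt_7_div_20_mem
  have hC₀ : 0.065 ≤ C := by rw [hC]; linarith
  have hCpos : 0 < C := by linarith
  have hgap₀ : 0 ≤ C - R (1 / 11) := by rw [hC, hR]; linarith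
  have hgap : C - R (1 / 11) ≤ 0.025 := by rw [hC, hR]; linarith
  have hCE₁ : CE ≤ 0.171 := by rw [hCE]; linarith [shannonEnt4_7_div_40_ge]
  have hR'₀ : 0.066 ≤ R' (1 / 11) := by
    rw [hR']; linarith [binEnt_one_div_eleven_ge, shannonEnt4_7_div_220_le]
  refine ⟨1 / 11, by norm_num, by rw [hR]; linarith, by linarith, ?_⟩
  rw [gt_iff_lt, one_sub_div hCpos.ne', div_mul_eq_mul_div, div_lt_iff₀ hCpos]
  calc (C - R (1 / 11)) * CE
      ≤ 0.025 * 0.171 := mul_le_mul_of_nonneg hgap hCE₁ hgap₀ (by norm_num)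
    _ < 0.066 * 0.065 := by norm_num
    _ ≤ R' (1 / 11) * C := mul_le_mul hR'₀ hC₀ (by norm_num) (by linarith)
end
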